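/- For all x ∈ ℝ^n and y ∈ ℝ^m, (⊞_{i∈[n]} x_i)·(⊞_{j∈[m]} y_j) = ⊞_{(i,j)∈[n]×[m]} x_i y_j, where ⊞ denotes the n-ary limit operation F. -/

import Mathlib

open scoped Classical

/-- ξ_I[x](α): signed count of occurrences of α among the x i, i ∈ I. -/
noncomputable def xiF {ι : Type*} (I : Finset ι) (x : ι → ℝ) (α : ℝ) : ℤ :=
  ((I.filter fun i => x i = α).card : ℤ) - ((I.filter fun i => x i = -α).card : ℤ)

/-- the n-ary limit operation F_I, i.e. ⊞_{i∈I} x_i. -/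
noncomputable def FF {ι : Type*} (I : Finset ι) (x : ι → ℝ) : ℝ :=
  if h : (I.filter fun j => xiF I x (x j) ≠ 0).Nonempty then
    if 0 < xiF I x ((I.filter fun j => xiF I x (x j) ≠ 0).sup' h fun i => |x i|) then
      (I.filter fun j => xiF I x (x j) ≠ 0).sup' h x
    else if xiF I x ((I.filter fun j => xiF I x (x j) ≠ 0).sup' h fun i => |x i|) < 0 then
      (I.filter fun j => xiF I x (x j) ≠ 0).inf' h x
    else 0
  else 0

/-!
`⊞ z = sign (ξ(M)) * M`, where `M = max {|α| : ξ(α) ≠ 0}` (and `M = 0` if there is no such `α`).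
For the family `z_(i,j) = x_i y_j` and `γ ≠ 0`, oddness of `ξ` gives the convolution formula
`ξ_z(γ) = ∑_{α ≥ 0} ξ_x(α) ξ_y(γ / α)`. When `|γ| ≥ M_x M_y`, every term with `α < M_x` has
`|γ / α| > M_y`, so only `α = M_x` survives. Hence `M_z = M_x M_y` and
`ξ_z(M_z) = ξ_x(M_x) ξ_y(M_y)`, and the signs multiply.
-/

section
variable {ι : Type*} (I : Finset ι) (x : ι → ℝ)

lemma xiF_eq_sum (α : ℝ) :
    xiF I x α = ∑ i ∈ I, ((if x i = α then 1 else 0) - (if x i = -α then 1 else 0)) := by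
  simp only [xiF, Finset.card_filter, Finset.sum_sub_distrib, Nat.cast_sum, Nat.cast_ite,
    Nat.cast_one, Nat.cast_zero]

lemma xiF_neg (α : ℝ) : xiF I x (-α) = -xiF I x α := by
  simp only [xiF, neg_neg, neg_sub]

@[simp]
lemma xiF_zero : xiF I x 0 = 0 := by
  simp [xiF]

lemma xiF_abs_eq_zero_iff (α : ℝ) : xiF I x |α| = 0 ↔ xiF I x α = 0 := by
  rcases abs_choice α with h | h <;> simp [h, xiF_neg]

variable {I x}

lemma xiF_eq_zero_iff_of_abs_eq {α β : ℝ} (h : |β| = |α|) :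
    xiF I x β = 0 ↔ xiF I x α = 0 := by
  rw [← xiF_abs_eq_zero_iff, h, xiF_abs_eq_zero_iff]

lemma exists_eq_of_xiF_pos {α : ℝ} (h : 0 < xiF I x α) : ∃ i ∈ I, x i = α := by
  have : 0 < (I.filter fun i => x i = α).card := by unfold xiF at h; omega
  obtain ⟨i, hi⟩ := Finset.card_pos.1 this
  exact ⟨i, (Finset.mem_filter.1 hi).1, (Finset.mem_filter.1 hi).2⟩

lemma exists_eq_neg_of_xiF_neg {α : ℝ} (h : xiF I x α < 0) : ∃ i ∈ I, x i = -α :=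
  exists_eq_of_xiF_pos (by rw [xiF_neg]; omega)

lemma exists_abs_eq_of_xiF_ne_zero {α : ℝ} (h : xiF I x α ≠ 0) :
    ∃ i ∈ I, |x i| = |α| ∧ xiF I x (x i) ≠ 0 := by
  suffices ∃ i ∈ I, |x i| = |α| from
    let ⟨i, hi, hxi⟩ := this; ⟨i, hi, hxi, mt (xiF_eq_zero_iff_of_abs_eq hxi).1 h⟩
  rcases h.lt_or_gt with h | h
  · obtain ⟨i, hi, hxi⟩ := exists_eq_neg_of_xiF_neg h
    exact ⟨i, hi, by rw [hxi, abs_neg]⟩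
  · obtain ⟨i, hi, hxi⟩ := exists_eq_of_xiF_pos h
    exact ⟨i, hi, by rw [hxi]⟩

end

lemma sum_odd_eq_sum_xiF_smul {ι G : Type*} [AddCommGroup G] (I : Finset ι) (x : ι → ℝ)
    {g : ℝ → G} (hg : ∀ β, g (-β) = -g β) (hg0 : g 0 = 0) :
    ∑ i ∈ I, g (x i) = ∑ α ∈ I.image (|x ·|), xiF I x α • g α := by
  have hS : ∀ α ∈ I.image (|x ·|), 0 ≤ α := by
    intro α hα
    obtain ⟨i, -, rfl⟩ := Finset.mem_image.1 hα
    exact abs_nonneg _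
  simp only [xiF_eq_sum, Finset.sum_smul]
  rw [Finset.sum_comm]
  refine Finset.sum_congr rfl fun i hi => ?_
  rw [Finset.sum_eq_single |x i|]
  · rcases lt_trichotomy (x i) 0 with h | h | h
    · have : x i ≠ -x i := by linarith
      simp [abs_of_neg h, this, hg]
    · simp [h, hg0]
    · have : x i ≠ -x i := by linarith
      simp [abs_of_pos h, this]
  · intro α hα hne
    have : x i ≠ α ∧ x i ≠ -α := by
      constructor <;> intro h <;> simp [h, abs_of_nonneg (hS α hα)] at hne
    simp [this]
  · intro h; exact absurd (Finset.mem_image_of_mem _ hi) h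

/-- `M = max_{k ∈ J} |z_k|`, and `M = 0` when `J = ∅`. -/
structure IsTopAbs {ι : Type*} (I : Finset ι) (x : ι → ℝ) (M : ℝ) : Prop where
  nonneg : 0 ≤ M
  eq_zero_or_xiF_ne_zero : M = 0 ∨ xiF I x M ≠ 0
  xiF_eq_zero_of_lt_abs : ∀ α, M < |α| → xiF I x α = 0

section
variable {ι : Type*} {I : Finset ι} {x : ι → ℝ} {M : ℝ}

lemma IsTopAbs.abs_le (h : IsTopAbs I x M) {α : ℝ} (hα : xiF I x α ≠ 0) : |α| ≤ M :=
  not_lt.1 fun hlt => hα (h.xiF_eq_zero_of_lt_abs α hlt)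

lemma exists_isTopAbs (I : Finset ι) (x : ι → ℝ) : ∃ M, IsTopAbs I x M := by
  set S := insert 0 ((I.filter fun i => xiF I x (x i) ≠ 0).image fun i => |x i|)
  have hS : S.Nonempty := Finset.insert_nonempty _ _
  refine ⟨S.max' hS, ⟨S.le_max' 0 (Finset.mem_insert_self _ _), ?_, fun α hα => ?_⟩⟩
  · rcases Finset.mem_insert.1 (S.max'_mem hS) with h0 | hmem
    · exact Or.inl h0
    · obtain ⟨i, hi, hxi⟩ := Finset.mem_image.1 hmem
      rw [← hxi]
      exact Or.inr (mt (xiF_abs_eq_zero_iff I x _).1 (Finset.mem_filter.1 hi).2)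
  · by_contra hne
    obtain ⟨i, hi, hxi, hne'⟩ := exists_abs_eq_of_xiF_ne_zero hne
    have := S.le_max' |x i|
      (Finset.mem_insert_of_mem (Finset.mem_image_of_mem _ (Finset.mem_filter.2 ⟨hi, hne'⟩)))
    linarith

lemma FF_eq_of_isTopAbs (h : IsTopAbs I x M) : FF I x = (xiF I x M).sign * M := by
  set J := I.filter fun j => xiF I x (x j) ≠ 0
  have hJ : ∀ {i}, i ∈ I → xiF I x (x i) ≠ 0 → i ∈ J :=
    fun hi hne => Finset.mem_filter.2 ⟨hi, hne⟩
  have habs_le : ∀ j ∈ J, |x j| ≤ M := fun j hj => h.abs_le (Finset.mem_filter.1 hj).2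
  by_cases hJne : J.Nonempty
  swap
  · suffices xiF I x M = 0 by simp [FF, J, hJne, this]
    by_contra hne
    obtain ⟨i, hi, -, hne'⟩ := exists_abs_eq_of_xiF_ne_zero hne
    exact hJne ⟨i, hJ hi hne'⟩
  have hsup : J.sup' hJne (fun i => |x i|) = M := by
    refine le_antisymm (Finset.sup'_le _ _ habs_le) ?_
    rcases h.eq_zero_or_xiF_ne_zero with h0 | hne
    · obtain ⟨j, hj⟩ := hJne
      exact h0 ▸ (abs_nonneg _).trans (Finset.le_sup' (fun i => |x i|) hj)
    · obtain ⟨i, hi, hxi, hne'⟩ := exists_abs_eq_of_xiF_ne_zero hne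
      rw [← abs_of_nonneg h.nonneg, ← hxi]
      exact Finset.le_sup' (fun i => |x i|) (hJ hi hne')
  rw [FF, dif_pos hJne, hsup]
  rcases lt_trichotomy (xiF I x M) 0 with hneg | hzero | hpos
  · rw [if_neg hneg.not_gt, if_pos hneg, Int.sign_eq_neg_one_of_neg hneg, Int.cast_neg,
      Int.cast_one, neg_one_mul]
    obtain ⟨i, hi, hxi⟩ := exists_eq_neg_of_xiF_neg hneg
    refine le_antisymm (hxi ▸ Finset.inf'_le x (hJ hi ?_)) (Finset.le_inf' _ _ fun j hj => ?_)
    · linarith [neg_abs_le (x j), habs_le j hj]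
    · rw [hxi, xiF_neg]; omega
  · simp [hzero]
  · rw [if_pos hpos, Int.sign_eq_one_of_pos hpos, Int.cast_one, one_mul]
    obtain ⟨i, hi, hxi⟩ := exists_eq_of_xiF_pos hpos
    refine le_antisymm (Finset.sup'_le _ _ fun j hj => ?_) (hxi ▸ Finset.le_sup' x (hJ hi ?_))
    · linarith [le_abs_self (x j), habs_le j hj]
    · rw [hxi]; omega

end

section
variable {ι κ : Type*} {I : Finset ι} {K : Finset κ} {x : ι → ℝ} {y : κ → ℝ}

lemma xiF_product_eq_sum {γ : ℝ} (hγ : γ ≠ 0) :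
    xiF (I ×ˢ K) (fun q => x q.1 * y q.2) γ = ∑ i ∈ I, xiF K y (γ / x i) := by
  rw [xiF_eq_sum, Finset.sum_product]
  refine Finset.sum_congr rfl fun i _ => ?_
  by_cases hx : x i = 0
  · simp [hx, hγ, hγ.symm]
  · rw [xiF_eq_sum]
    refine Finset.sum_congr rfl fun j _ => ?_
    simp only [← neg_div, eq_div_iff hx, mul_comm (y j)]

lemma xiF_product_eq_sum_mul {γ : ℝ} (hγ : γ ≠ 0) :
    xiF (I ×ˢ K) (fun q => x q.1 * y q.2) γ =
      ∑ α ∈ I.image (|x ·|), xiF I x α * xiF K y (γ / α) := by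
  rw [xiF_product_eq_sum hγ, sum_odd_eq_sum_xiF_smul I x (g := fun β => xiF K y (γ / β))]
  · rfl
  · intro β; rw [div_neg, xiF_neg]
  · rw [div_zero, xiF_zero]

variable {Mx My : ℝ}

lemma xiF_product_of_isTopAbs (hx : IsTopAbs I x Mx) (hy : IsTopAbs K y My) {γ : ℝ}
    (hγ0 : γ ≠ 0) (hγ : Mx * My ≤ |γ|) :
    xiF (I ×ˢ K) (fun q => x q.1 * y q.2) γ = xiF I x Mx * xiF K y (γ / Mx) := by
  rw [xiF_product_eq_sum_mul hγ0]
  refine Finset.sum_eq_single Mx (fun α hα hne => ?_) fun hMx => ?_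
  · obtain ⟨i, -, rfl⟩ := Finset.mem_image.1 hα
    by_cases hξ : xiF I x |x i| = 0
    · rw [hξ, zero_mul]
    have hlt : |x i| < Mx := lt_of_le_of_ne (by simpa using hx.abs_le hξ) hne
    have hpos : 0 < |x i| := abs_pos.2 fun h0 => hξ (by simp [h0])
    rw [hy.xiF_eq_zero_of_lt_abs _ ?_, mul_zero]
    rw [abs_div, abs_abs, lt_div_iff₀ hpos]
    rcases hy.nonneg.eq_or_lt with h0 | h0
    · rw [← h0, zero_mul]; exact abs_pos.2 hγ0
    · nlinarith
  · by_contra hne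
    obtain ⟨i, hi, hxi, -⟩ := exists_abs_eq_of_xiF_ne_zero (left_ne_zero_of_mul hne)
    exact hMx (Finset.mem_image.2 ⟨i, hi, hxi.trans (abs_of_nonneg hx.nonneg)⟩)

lemma xiF_product_mul_of_isTopAbs (hx : IsTopAbs I x Mx) (hy : IsTopAbs K y My) :
    xiF (I ×ˢ K) (fun q => x q.1 * y q.2) (Mx * My) = xiF I x Mx * xiF K y My := by
  by_cases h : Mx * My = 0
  · rcases mul_eq_zero.1 h with h | h <;> simp [h]
  rw [xiF_product_of_isTopAbs hx hy h (le_abs_self _),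
    mul_div_cancel_left₀ _ (left_ne_zero_of_mul h)]

lemma IsTopAbs.product (hx : IsTopAbs I x Mx) (hy : IsTopAbs K y My) :
    IsTopAbs (I ×ˢ K) (fun q => x q.1 * y q.2) (Mx * My) := by
  refine ⟨mul_nonneg hx.nonneg hy.nonneg, ?_, fun γ hγ => ?_⟩
  · rw [xiF_product_mul_of_isTopAbs hx hy]
    rcases hx.eq_zero_or_xiF_ne_zero with h0 | hne
    · simp [h0]
    rcases hy.eq_zero_or_xiF_ne_zero with h0 | hne'
    · simp [h0]
    exact Or.inr (mul_ne_zero hne hne')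
  have hγ0 : γ ≠ 0 := abs_pos.1 ((mul_nonneg hx.nonneg hy.nonneg).trans_lt hγ)
  rw [xiF_product_of_isTopAbs hx hy hγ0 hγ.le]
  rcases hx.nonneg.eq_or_lt with h0 | h0
  · rw [← h0, xiF_zero, zero_mul]
  rw [hy.xiF_eq_zero_of_lt_abs _ ?_, mul_zero]
  rw [abs_div, abs_of_pos h0, lt_div_iff₀ h0]
  linarith

end

theorem stmt_10 {n m : ℕ} (x : Fin n → ℝ) (y : Fin m → ℝ) :
    (FF Finset.univ x) * (FF Finset.univ y) =
      FF (Finset.univ : Finset (Fin n × Fin m)) (fun q => x q.1 * y q.2) := by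
  obtain ⟨Mx, hx⟩ := exists_isTopAbs Finset.univ x
  obtain ⟨My, hy⟩ := exists_isTopAbs Finset.univ y
  rw [← Finset.univ_product_univ, FF_eq_of_isTopAbs hx, FF_eq_of_isTopAbs hy,
    FF_eq_of_isTopAbs (hx.product hy), xiF_product_mul_of_isTopAbs hx hy, Int.sign_mul]
  push_cast
  ring
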